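/- Let e=(a,b) be a failing edge of an SPT T, and let g=(x,y) be a swap edge for e minimizing d_T(s,x')+w(x',v') over all swap edges (x',v'). Then for every vertex u in the detached subtree T_b, d_{G−e}(s,u) ≥ d_T(s,x) + w(g). -/

import Mathlib

/-!
A walk from `s` into `T_b` in `G − e` must leave the source side of `T − e` along some edge
`(x', v')`, which is then a swap edge for `e`. Its part before that edge is a walk of `G` to
`x'`, so it is at least `d_G(s, x') = d_T(s, x')`, and the walk is at least
`d_T(s, x') + w(x', v') ≥ d_T(s, x) + w(g)` by the minimality of `g`.
-/

open SimpleGraph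

/-- The weighted length of a walk. -/
noncomputable def wlen {V : Type*} (W : V → V → ℝ) {G : SimpleGraph V} {u v : V}
    (p : G.Walk u v) : ℝ :=
  (p.darts.map (fun d => W d.toProd.1 d.toProd.2)).sum

/-- The weighted distance between two vertices of a graph: the infimum of the
weighted lengths of all walks joining them. -/
noncomputable def wdist {V : Type*} (W : V → V → ℝ) (G : SimpleGraph V) (u v : V) : ℝ :=
  sInf {x : ℝ | ∃ p : G.Walk u v, x = wlen W p}

/-- `(x, y)` is a swap edge for the failing tree edge `e = (a,b)` (with `b` the child):
a non-tree edge of `G` whose endpoint `x` lies in the component of `T − e` containing the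
source and whose endpoint `y` lies in the detached component, i.e. the one containing `b`. -/
def swapEdge {V : Type*} (T G : SimpleGraph V) (a b x y : V) : Prop :=
  G.Adj x y ∧ s(x, y) ∉ T.edgeSet ∧
    ¬ (T.deleteEdges {s(a, b)}).Reachable b x ∧
    (T.deleteEdges {s(a, b)}).Reachable b y

/-- The max-stretch `μ` of a swap edge `(x, y)` for the failing edge `e = (a,b)`:
the supremum over the vertices `u` of the detached subtree `T_b` of
`d_{T_{e/f}}(s,u) / d_{G−e}(s,u)`, where `d_{T_{e/f}}(s,u) = d_T(s,x) + w(x,y) + d_T(y,u)`. -/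
noncomputable def muSt {V : Type*} (W : V → V → ℝ) (T G : SimpleGraph V)
    (s a b x y : V) : ℝ :=
  sSup {r : ℝ | ∃ u : V, (T.deleteEdges {s(a, b)}).Reachable b u ∧
    r = (wdist W T s x + W x y + wdist W T y u) /
        wdist W (G.deleteEdges {s(a, b)}) s u}

namespace SimpleGraph.Walk

variable {V : Type*} {G : SimpleGraph V}

theorem exists_eq_append_cons_of_notMem_of_mem (S : Set V) {c d : V} (p : G.Walk c d)
    (hc : c ∉ S) (hd : d ∈ S) :
    ∃ (x y : V) (q : G.Walk c x) (h : G.Adj x y) (r : G.Walk y d),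
      x ∉ S ∧ y ∈ S ∧ p = q.append (cons h r) := by
  induction p with
  | nil => exact absurd hd hc
  | @cons c m d h p ih =>
    by_cases hm : m ∈ S
    · exact ⟨c, m, nil, h, p, hc, hm, rfl⟩
    · obtain ⟨x, y, q, h', r, hx, hy, rfl⟩ := ih hm hd
      exact ⟨x, y, cons h q, h', r, hx, hy, rfl⟩

end SimpleGraph.Walk

section WeightedLength

variable {V : Type*} (W : V → V → ℝ) {G H : SimpleGraph V}

@[simp]
theorem wlen_nil {u : V} : wlen W (Walk.nil : G.Walk u u) = 0 := by
  simp [wlen]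

@[simp]
theorem wlen_cons {u v w : V} (h : G.Adj u v) (p : G.Walk v w) :
    wlen W (Walk.cons h p) = W u v + wlen W p := by
  simp [wlen]

@[simp]
theorem wlen_append {u v w : V} (p : G.Walk u v) (q : G.Walk v w) :
    wlen W (p.append q) = wlen W p + wlen W q := by
  simp [wlen]

@[simp]
theorem wlen_mapLe (hGH : G ≤ H) {u v : V} (p : G.Walk u v) :
    wlen W (p.mapLe hGH) = wlen W p := by
  induction p <;> simp [*]

variable {W}

theorem wlen_nonneg (hW : ∀ u v, G.Adj u v → 0 ≤ W u v) {u v : V} (p : G.Walk u v) :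
    0 ≤ wlen W p := by
  induction p with
  | nil => simp
  | cons h p ih => simpa using add_nonneg (hW _ _ h) ih

theorem wdist_le_wlen (hW : ∀ u v, G.Adj u v → 0 ≤ W u v) {u v : V} (p : G.Walk u v) :
    wdist W G u v ≤ wlen W p :=
  csInf_le ⟨0, by rintro _ ⟨q, rfl⟩; exact wlen_nonneg hW q⟩ ⟨p, rfl⟩

theorem le_wdist {u v : V} {c : ℝ} (huv : G.Reachable u v)
    (hc : ∀ p : G.Walk u v, c ≤ wlen W p) : c ≤ wdist W G u v := by
  obtain ⟨p⟩ := huv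
  exact le_csInf ⟨_, p, rfl⟩ (by rintro _ ⟨q, rfl⟩; exact hc q)

end WeightedLength

/-- A tree edge other than `e` would join the two components of `T − e`. -/
theorem swapEdge_of_adj_deleteEdges {V : Type*} {T G : SimpleGraph V} {a b x y : V}
    (hxy : (G.deleteEdges {s(a, b)}).Adj x y)
    (hx : ¬ (T.deleteEdges {s(a, b)}).Reachable b x)
    (hy : (T.deleteEdges {s(a, b)}).Reachable b y) :
    swapEdge T G a b x y := by
  rw [deleteEdges_adj, Set.mem_singleton_iff] at hxy
  refine ⟨hxy.1, fun hT => hx (hy.trans ?_), hx, hy⟩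
  exact (deleteEdges_adj.2 ⟨hT, hxy.2⟩).reachable.symm

theorem good_swap_edge_lower_bound_general {V : Type*}
    (G T : SimpleGraph V) (W : V → V → ℝ) (s a b : V)
    (hWpos : ∀ u w : V, G.Adj u w → 0 < W u w)
    (h2ec : ∀ e' ∈ G.edgeSet, (G.deleteEdges {e'}).Connected)
    (hTG : T ≤ G)
    (hSPT : ∀ u : V, wdist W T s u = wdist W G s u)
    (he : s(a, b) ∈ T.edgeSet)
    (hb : ¬ (T.deleteEdges {s(a, b)}).Reachable s b)
    (x y : V)
    (hgmin : ∀ x' v' : V, swapEdge T G a b x' v' →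
      wdist W T s x + W x y ≤ wdist W T s x' + W x' v') :
    ∀ u : V, (T.deleteEdges {s(a, b)}).Reachable b u →
      wdist W T s x + W x y ≤ wdist W (G.deleteEdges {s(a, b)}) s u := by
  intro u hu
  have hW : ∀ v w, G.Adj v w → 0 ≤ W v w := fun v w h => (hWpos v w h).le
  refine le_wdist ((h2ec _ (hTG he)).preconnected s u) fun p => ?_
  obtain ⟨x', v', q, hx'v', r, hx', hv', rfl⟩ :=
    p.exists_eq_append_cons_of_notMem_of_mem {z | (T.deleteEdges {s(a, b)}).Reachable b z}
      (fun hs => hb hs.symm) hu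
  have hq : wdist W G s x' ≤ wlen W q := by
    simpa using wdist_le_wlen hW (q.mapLe (deleteEdges_le _))
  have hr : 0 ≤ wlen W r := wlen_nonneg (fun v w h => hW v w (deleteEdges_le _ h)) r
  calc wdist W T s x + W x y ≤ wdist W T s x' + W x' v' :=
        hgmin x' v' (swapEdge_of_adj_deleteEdges hx'v' hx' hv')
    _ = wdist W G s x' + W x' v' := by rw [hSPT]
    _ ≤ wlen W q + W x' v' + wlen W r := by linarith
    _ = wlen W (q.append (.cons hx'v' r)) := by rw [wlen_append, wlen_cons]; ring

/-- Let `e = (a,b)` be a failing edge of an SPT `T` of a 2-edge-connected positively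
weighted graph `G`, and let `g = (x,y)` be a swap edge for `e` minimizing
`d_T(s,x') + w(x',v')` over all swap edges `(x',v')` for `e`.  Then for every vertex `u` of
the detached subtree `T_b`, `d_{G−e}(s,u) ≥ d_T(s,x) + w(g)`. -/
theorem good_swap_edge_lower_bound {V : Type*} [Fintype V]
    (G T : SimpleGraph V) (W : V → V → ℝ) (s a b : V)
    (hWpos : ∀ u w : V, G.Adj u w → 0 < W u w)
    (hWsymm : ∀ u w : V, W u w = W w u)
    (hGconn : G.Connected)
    (h2ec : ∀ e' ∈ G.edgeSet, (G.deleteEdges {e'}).Connected)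
    (hTG : T ≤ G) (hT : T.IsTree)
    (hSPT : ∀ u : V, wdist W T s u = wdist W G s u)
    (he : s(a, b) ∈ T.edgeSet)
    (hb : ¬ (T.deleteEdges {s(a, b)}).Reachable s b)
    (x y : V) (hg : swapEdge T G a b x y)
    (hgmin : ∀ x' v' : V, swapEdge T G a b x' v' →
      wdist W T s x + W x y ≤ wdist W T s x' + W x' v') :
    ∀ u : V, (T.deleteEdges {s(a, b)}).Reachable b u →
      wdist W T s x + W x y ≤ wdist W (G.deleteEdges {s(a, b)}) s u :=
  good_swap_edge_lower_bound_general G T W s a b hWpos h2ec hTG hSPT he hb x y hgmin
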